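/- arXiv:1208.1140 — 8 statements merged into one kernel-verified Lean document; each statement's English description precedes it below -/
import Mathlib

section
/- Let 𝔄 be a complex unital Banach algebra, let A, B ∈ 𝔄 and s ∈ ℂ satisfy A·B − B·A = s·B. Then exp(A)·exp(B) = exp(e^{s}·B)·exp(A). -/
/-!
The relation `A * B - B * A = s • B` says that `B * (A + s) = A * B`: the element `B`
intertwines `A + s` with `A`, hence also their exponentials. Since `s` is central,
`exp (A + s) = e^s • exp A`, so `exp A * B = (e^s • B) * exp A`; exponentiating `B` once more
gives `exp A * exp B = exp (e^s • B) * exp A`.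
-/

open NormedSpace

theorem semiconjBy_add_smul_one_of_mul_sub_mul_eq_smul {𝕂 R : Type*} [CommSemiring 𝕂] [Ring R]
    [Algebra 𝕂 R] {a b : R} {c : 𝕂} (h : a * b - b * a = c • b) :
    SemiconjBy b (a + c • 1) a := by
  rw [SemiconjBy, mul_add, mul_smul_comm, mul_one, ← h, add_sub_cancel]

section

variable {𝕂 𝔸 : Type*} [RCLike 𝕂] [NormedRing 𝔸] [NormedAlgebra 𝕂 𝔸] [CompleteSpace 𝔸]

theorem exp_add_smul_one (x : 𝔸) (c : 𝕂) : exp (x + c • (1 : 𝔸)) = exp c • exp x := by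
  -- the product formula for `exp` is stated for Banach algebras over `ℚ`
  let : NormedAlgebra ℚ 𝔸 := .restrictScalars ℚ 𝕂 𝔸
  rw [add_comm, exp_add_of_commute ((Commute.one_left x).smul_left c),
    ← Algebra.algebraMap_eq_smul_one, ← algebraMap_exp_comm, Algebra.algebraMap_eq_smul_one,
    smul_one_mul]

theorem semiconjBy_exp_of_mul_sub_mul_eq_smul {a b : 𝔸} {c : 𝕂}
    (h : a * b - b * a = c • b) : SemiconjBy (exp a) b (exp c • b) := by
  let : NormedAlgebra ℚ 𝔸 := .restrictScalars ℚ 𝕂 𝔸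
  have hexp := (semiconjBy_add_smul_one_of_mul_sub_mul_eq_smul h).exp_right
  rw [exp_add_smul_one, SemiconjBy, mul_smul_comm] at hexp
  rw [SemiconjBy, ← hexp, smul_mul_assoc]

end

/-- In a complex unital Banach algebra, if `A·B − B·A = s·B` then
`exp(A)·exp(B) = exp(e^{s}·B)·exp(A)` (the "braiding identity"). -/
theorem stmt_2 (𝔄 : Type*) [NormedRing 𝔄] [NormedAlgebra ℂ 𝔄] [CompleteSpace 𝔄]
    (A B : 𝔄) (s : ℂ) (h : A * B - B * A = s • B) :
    NormedSpace.exp A * NormedSpace.exp B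
      = NormedSpace.exp (Complex.exp s • B) * NormedSpace.exp A := by
  let : NormedAlgebra ℚ 𝔄 := .restrictScalars ℚ ℂ 𝔄
  rw [Complex.exp_eq_exp_ℂ]
  exact (semiconjBy_exp_of_mul_sub_mul_eq_smul h).exp_right
end

section
/- For all continuous compactly supported functions f, g, h : ℝ² → ℂ, the convolution ∗̂ is associative: (f ∗̂ g) ∗̂ h = f ∗̂ (g ∗̂ h). -/
open MeasureTheory

/-- The convolution of the affine group `ℝ²` (group law `(a,b)·(a',b') = (a+a', b+e^{-a}b')`,
left Haar measure `e^{a} da db`):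
`(f ∗̂ g)(a,b) := ∫∫ e^{a'} f(a',b') g(a−a', e^{a'}(b−b')) da' db'`. -/
noncomputable def hconv (f g : ℝ × ℝ → ℂ) : ℝ × ℝ → ℂ := fun p =>
  ∫ q : ℝ × ℝ, Real.exp q.1 • (f q * g (p.1 - q.1, Real.exp q.1 * (p.2 - q.2)))

lemma comp_aux (G : ℝ → ℂ) {a : ℝ} (ha : 0 < a) (b : ℝ) :
    ∫ s : ℝ, G (b + a * s) = a⁻¹ • ∫ t : ℝ, G t := by
  rw [MeasureTheory.Measure.integral_comp_mul_left (fun t => G (b + t)) a,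
    integral_add_left_eq_self (μ := volume) b (f := G), abs_of_pos (inv_pos.mpr ha)]

namespace HconvAux

noncomputable def Kf (f g h : ℝ × ℝ → ℂ) (x q r : ℝ × ℝ) : ℂ :=
  Real.exp (q.1 + r.1) •
    (f r * g (q.1 - r.1, Real.exp r.1 * (q.2 - r.2)) *
      h (x.1 - q.1, Real.exp q.1 * (x.2 - q.2)))

noncomputable def Mf (f g h : ℝ × ℝ → ℂ) (x r s : ℝ × ℝ) : ℂ :=
  Real.exp (r.1 + s.1) •
    (f r * g s *
      h (x.1 - r.1 - s.1, Real.exp s.1 * (Real.exp r.1 * (x.2 - r.2) - s.2)))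

noncomputable def ψf (x : ℝ × ℝ) : ℝ × ℝ → ℝ × ℝ :=
  fun u => (x.1 - u.1, x.2 - Real.exp (u.1 - x.1) * u.2)

variable {f g h : ℝ × ℝ → ℂ} {x : ℝ × ℝ}

lemma ψcont : Continuous (ψf x) := by unfold ψf; fun_prop

lemma key (h : ℝ × ℝ → ℂ) (x q : ℝ × ℝ)
    (hq : h (x.1 - q.1, Real.exp q.1 * (x.2 - q.2)) ≠ 0) :
    q ∈ ψf x '' tsupport h := by
  refine ⟨(x.1 - q.1, Real.exp q.1 * (x.2 - q.2)), subset_tsupport _ hq, ?_⟩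
  have e1 : x.1 - q.1 - x.1 = -q.1 := by ring
  simp only [ψf, e1]
  refine Prod.ext (by simp) ?_
  simp only []
  rw [← mul_assoc, ← Real.exp_add, neg_add_cancel, Real.exp_zero, one_mul]
  ring

lemma Kzero (f g h : ℝ × ℝ → ℂ) (x q r : ℝ × ℝ) (hq : q ∉ ψf x '' tsupport h) :
    Kf f g h x q r = 0 := by
  have : h (x.1 - q.1, Real.exp q.1 * (x.2 - q.2)) = 0 := by
    by_contra hc; exact hq (key h x q hc)
  simp [Kf, this]

lemma Kcont (hf : Continuous f) (hg : Continuous g) (hh : Continuous h) :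
    Continuous (fun p : (ℝ × ℝ) × (ℝ × ℝ) => Kf f g h x p.1 p.2) := by
  unfold Kf; fun_prop

lemma Kint (hf : Continuous f) (hf' : HasCompactSupport f)
    (hg : Continuous g) (hh : Continuous h) (hh' : HasCompactSupport h) :
    Integrable (fun p : (ℝ × ℝ) × (ℝ × ℝ) => Kf f g h x p.1 p.2)
      ((volume : Measure (ℝ × ℝ)).prod volume) := by
  rw [← Measure.volume_eq_prod]
  refine Continuous.integrable_of_hasCompactSupport (Kcont hf hg hh) ?_
  refine HasCompactSupport.intro (((hh'.image (ψcont (x := x))).prod hf')) ?_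
  intro p hp
  rw [Set.mem_prod, not_and_or] at hp
  rcases hp with hp | hp
  · exact Kzero f g h x _ _ hp
  · have : f p.2 = 0 := image_eq_zero_of_notMem_tsupport hp
    simp [Kf, this]

lemma Krint (hf : Continuous f) (hg : Continuous g) (hh : Continuous h)
    (hh' : HasCompactSupport h) (r : ℝ × ℝ) :
    Integrable (fun q => Kf f g h x q r) ((volume : Measure ℝ).prod volume) := by
  rw [← Measure.volume_eq_prod]
  refine Continuous.integrable_of_hasCompactSupport ?_ ?_
  · unfold Kf; fun_prop
  · exact HasCompactSupport.intro (hh'.image (ψcont (x := x)))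
      fun q hq => Kzero f g h x q r hq

lemma Mrint (hf : Continuous f) (hg : Continuous g) (hg' : HasCompactSupport g)
    (hh : Continuous h) (r : ℝ × ℝ) :
    Integrable (fun s => Mf f g h x r s) ((volume : Measure ℝ).prod volume) := by
  rw [← Measure.volume_eq_prod]
  refine Continuous.integrable_of_hasCompactSupport (by unfold Mf; fun_prop) ?_
  refine HasCompactSupport.intro hg' fun s hs => ?_
  have : g s = 0 := image_eq_zero_of_notMem_tsupport hs
  simp [Mf, this]

lemma subst (hf : Continuous f) (hg : Continuous g) (hg' : HasCompactSupport g)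
    (hh : Continuous h) (hh' : HasCompactSupport h) (r : ℝ × ℝ) :
    ∫ s, Mf f g h x r s = ∫ q, Kf f g h x q r := by
  have hpt : ∀ s1 s2 : ℝ, Kf f g h x (s1 + r.1, r.2 + Real.exp (-r.1) * s2) r
      = Real.exp r.1 • Mf f g h x r (s1, s2) := by
    intro s1 s2
    have h1 : Real.exp r.1 * Real.exp (-r.1) = 1 := by
      rw [← Real.exp_add, add_neg_cancel, Real.exp_zero]
    have e1 : Real.exp r.1 * (r.2 + Real.exp (-r.1) * s2 - r.2) = s2 := by
      linear_combination s2 * h1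
    have e2 : Real.exp (s1 + r.1) * (x.2 - (r.2 + Real.exp (-r.1) * s2))
        = Real.exp s1 * (Real.exp r.1 * (x.2 - r.2) - s2) := by
      rw [Real.exp_add]
      linear_combination (-(Real.exp s1 * s2)) * h1
    simp only [Kf, Mf]
    rw [smul_smul, ← Real.exp_add,
      show s1 + r.1 - r.1 = s1 from by ring, e1,
      show x.1 - (s1 + r.1) = x.1 - r.1 - s1 from by ring, e2,
      show s1 + r.1 + r.1 = r.1 + (r.1 + s1) from by ring]
  calc ∫ s, Mf f g h x r s
      = ∫ s1, ∫ s2, Mf f g h x r (s1, s2) := by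
        rw [Measure.volume_eq_prod, integral_prod _ (Mrint hf hg hg' hh r)]
    _ = ∫ s1, Real.exp (-r.1) •
          ∫ s2, Kf f g h x (s1 + r.1, r.2 + Real.exp (-r.1) * s2) r := by
        refine congrArg (integral volume) (funext fun s1 => ?_)
        rw [← integral_smul]
        refine congrArg (integral volume) (funext fun s2 => ?_)
        rw [hpt s1 s2, smul_smul, ← Real.exp_add, neg_add_cancel, Real.exp_zero, one_smul]
    _ = ∫ s1, ∫ q2, Kf f g h x (s1 + r.1, q2) r := by
        refine congrArg (integral volume) (funext fun s1 => ?_)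
        rw [comp_aux (fun t => Kf f g h x (s1 + r.1, t) r) (Real.exp_pos (-r.1)) r.2,
          smul_smul, ← Real.exp_neg, ← Real.exp_add,
          show (-r.1 + - -r.1 : ℝ) = 0 from by ring, Real.exp_zero, one_smul]
    _ = ∫ q1, ∫ q2, Kf f g h x (q1, q2) r :=
        integral_add_right_eq_self (μ := volume) (fun t => ∫ q2, Kf f g h x (t, q2) r) r.1
    _ = ∫ q, Kf f g h x q r := by
        rw [Measure.volume_eq_prod, integral_prod _ (Krint hf hg hh hh' r)]

end HconvAux

open HconvAux

/-- The convolution `∗̂` is associative on continuous compactly supported functions. -/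
theorem stmt_3 (f g h : ℝ × ℝ → ℂ)
    (hf : Continuous f) (hf' : HasCompactSupport f)
    (hg : Continuous g) (hg' : HasCompactSupport g)
    (hh : Continuous h) (hh' : HasCompactSupport h) :
    hconv (hconv f g) h = hconv f (hconv g h) := by
  funext x
  simp only [hconv]
  calc (∫ q : ℝ × ℝ, Real.exp q.1 •
          ((∫ p : ℝ × ℝ, Real.exp p.1 • (f p * g (q.1 - p.1, Real.exp p.1 * (q.2 - p.2)))) *
            h (x.1 - q.1, Real.exp q.1 * (x.2 - q.2))))
      = ∫ q, ∫ r, Kf f g h x q r := by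
        refine congrArg (integral volume) (funext fun q => ?_)
        rw [← integral_mul_const, ← integral_smul]
        refine congrArg (integral volume) (funext fun r => ?_)
        simp only [Kf]
        rw [smul_mul_assoc, smul_smul, ← Real.exp_add]
    _ = ∫ r, ∫ q, Kf f g h x q r := by
        exact integral_integral_swap (Kint hf hf' hg hh hh')
    _ = ∫ r, ∫ s, Mf f g h x r s := by
        refine congrArg (integral volume) (funext fun r => ?_)
        exact (subst hf hg hg' hh hh' r).symm
    _ = ∫ q : ℝ × ℝ, Real.exp q.1 • (f q *
          ∫ p : ℝ × ℝ, Real.exp p.1 •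
            (g p * h (x.1 - q.1 - p.1, Real.exp p.1 * (Real.exp q.1 * (x.2 - q.2) - p.2)))) := by
        refine congrArg (integral volume) (funext fun q => ?_)
        rw [← integral_const_mul, ← integral_smul]
        refine congrArg (integral volume) (funext fun r => ?_)
        simp only [Mf]
        rw [mul_smul_comm, smul_smul, ← Real.exp_add, mul_assoc]
end

section
/- Let f, g : ℝ² → ℂ be smooth and compactly supported. Then for all (a,β) ∈ ℝ²: (i) (f ∗̂ g)~(a,β) = (f̃ ∗̃ g̃)(a,β); (ii) (f*)~(a,β) = conj(f̃(−a, e^{-a}β)). In other words, the transform f ↦ f̃ intertwines the convolution ∗̂ with the product ∗̃ and the involution f*(a,b) = e^{-a}·conj(f(−a,−e^{a}b)) with the involution F*(a,β) = conj(F(−a, e^{-a}β)). -/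
open MeasureTheory

/-- The involution `f*(a,b) := e^{-a}·conj(f(−a, −e^{a}b))`. -/
noncomputable def hstar (f : ℝ × ℝ → ℂ) : ℝ × ℝ → ℂ := fun p =>
  Real.exp (-p.1) • (starRingEnd ℂ) (f (-p.1, -Real.exp p.1 * p.2))

/-- The partial Fourier transform `f̃(a,β) := e^{a} ∫ f(a,b) e^{ibβ} db`. -/
noncomputable def tildeT (f : ℝ × ℝ → ℂ) : ℝ × ℝ → ℂ := fun p =>
  Real.exp p.1 • ∫ b : ℝ, f (p.1, b) * Complex.exp (Complex.I * b * p.2)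

/-- The product `(F ∗̃ G)(a,β) := ∫ F(a',β) G(a−a', e^{-a'}β) da'`. -/
noncomputable def tconv (F G : ℝ × ℝ → ℂ) : ℝ × ℝ → ℂ := fun p =>
  ∫ a' : ℝ, F (a', p.2) * G (p.1 - a', Real.exp (-a') * p.2)

/-- The involution `F*(a,β) := conj(F(−a, e^{-a}β))`. -/
noncomputable def tstar (F : ℝ × ℝ → ℂ) : ℝ × ℝ → ℂ := fun p =>
  (starRingEnd ℂ) (F (-p.1, Real.exp (-p.1) * p.2))


lemma expC (x : ℝ) : (Real.exp x : ℂ) * (Real.exp (-x) : ℂ) = 1 := by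
  norm_cast
  rw [← Real.exp_add]
  simp

lemma part1 (f g : ℝ × ℝ → ℂ)
    (hf : ContDiff ℝ (⊤ : ℕ∞) f) (hf' : HasCompactSupport f)
    (hg : ContDiff ℝ (⊤ : ℕ∞) g) (hg' : HasCompactSupport g) (a β : ℝ) :
    tildeT (hconv f g) (a, β) = tconv (tildeT f) (tildeT g) (a, β) := by
  obtain ⟨Rf, hRf0, hRf⟩ := hf'.isBounded.subset_closedBall_lt 0 0
  obtain ⟨Rg, hRg0, hRg⟩ := hg'.isBounded.subset_closedBall_lt 0 0
  set H : (ℝ × ℝ) × ℝ → ℂ := fun z =>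
    Real.exp z.1.1 • (f z.1 * g (a - z.1.1, Real.exp z.1.1 * (z.2 - z.1.2)))
      * Complex.exp (Complex.I * z.2 * β) with hH
  have Hcont : Continuous H := by
    have hfc := hf.continuous
    have hgc := hg.continuous
    fun_prop
  have Hsupp : HasCompactSupport H := by
    apply HasCompactSupport.intro
      ((ProperSpace.isCompact_closedBall (0 : ℝ × ℝ) Rf).prod
        (ProperSpace.isCompact_closedBall (0 : ℝ) (Rf + Rg * Real.exp Rf)))
    intro z hz
    by_contra hne
    apply hz
    have hf1 : f z.1 ≠ 0 := by
      intro h0; apply hne; simp [hH, h0]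
    have hg1 : g (a - z.1.1, Real.exp z.1.1 * (z.2 - z.1.2)) ≠ 0 := by
      intro h0; apply hne; simp [hH, h0]
    have hz1 : z.1 ∈ Metric.closedBall (0 : ℝ × ℝ) Rf :=
      hRf (subset_tsupport f (by simpa [Function.mem_support] using hf1))
    have hz2 : (a - z.1.1, Real.exp z.1.1 * (z.2 - z.1.2)) ∈ Metric.closedBall (0 : ℝ × ℝ) Rg :=
      hRg (subset_tsupport g (by simpa [Function.mem_support] using hg1))
    have hz1' := hz1
    rw [Metric.mem_closedBall, dist_zero_right] at hz1 hz2
    constructor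
    · exact hz1'
    · rw [Metric.mem_closedBall, dist_zero_right, Real.norm_eq_abs]
      have h11 : |z.1.1| ≤ Rf := le_trans (norm_fst_le z.1) hz1
      have h12 : |z.1.2| ≤ Rf := le_trans (norm_snd_le z.1) hz1
      have h2 : |Real.exp z.1.1 * (z.2 - z.1.2)| ≤ Rg :=
        le_trans (norm_snd_le (a - z.1.1, Real.exp z.1.1 * (z.2 - z.1.2))) hz2
      rw [abs_mul, abs_of_pos (Real.exp_pos _)] at h2
      have hlow : Real.exp (-Rf) ≤ Real.exp z.1.1 := by
        apply Real.exp_le_exp.2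
        cases abs_le.1 h11; linarith
      have hinv : Real.exp (-Rf) = (Real.exp Rf)⁻¹ := by rw [Real.exp_neg]
      have hpos : (0:ℝ) < Real.exp Rf := Real.exp_pos _
      have hd : |z.2 - z.1.2| ≤ Rg * Real.exp Rf := by
        rw [hinv] at hlow
        have h3 : |z.2 - z.1.2| * (Real.exp Rf)⁻¹ ≤ Rg := by
          calc |z.2 - z.1.2| * (Real.exp Rf)⁻¹ ≤ Real.exp z.1.1 * |z.2 - z.1.2| := by
                rw [mul_comm]
                exact mul_le_mul_of_nonneg_right hlow (abs_nonneg _)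
            _ ≤ Rg := h2
        calc |z.2 - z.1.2| = |z.2 - z.1.2| * (Real.exp Rf)⁻¹ * Real.exp Rf := by
              field_simp
          _ ≤ Rg * Real.exp Rf := mul_le_mul_of_nonneg_right h3 hpos.le
      calc |z.2| = |z.1.2 + (z.2 - z.1.2)| := by ring_nf
        _ ≤ |z.1.2| + |z.2 - z.1.2| := abs_add_le _ _
        _ ≤ Rf + Rg * Real.exp Rf := add_le_add h12 hd
  have Hint : Integrable H := Hcont.integrable_of_hasCompactSupport Hsupp
  have Hint2 : Integrable H ((volume : Measure (ℝ × ℝ)).prod (volume : Measure ℝ)) := by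
    rwa [MeasureTheory.Measure.volume_eq_prod] at Hint
  have Hint3 : Integrable H ((((volume : Measure ℝ)).prod (volume : Measure ℝ)).prod (volume : Measure ℝ)) := by
    rwa [MeasureTheory.Measure.volume_eq_prod (ℝ × ℝ) ℝ, MeasureTheory.Measure.volume_eq_prod ℝ ℝ] at Hint
  -- inner integral computation
  set Jg : ℝ → ℂ := fun q1 => ∫ u : ℝ, g (a - q1, u) * Complex.exp (Complex.I * u * (Real.exp (-q1) * β : ℝ)) with hJg
  set If : ℝ → ℂ := fun q1 => ∫ b : ℝ, f (q1, b) * Complex.exp (Complex.I * b * β) with hIf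
  have inner : ∀ q1 q2 : ℝ, (∫ b : ℝ, H ((q1, q2), b))
      = f (q1, q2) * Complex.exp (Complex.I * q2 * β) * Jg q1 := by
    intro q1 q2
    simp only [hJg]
    have step1 : ∀ b : ℝ, H ((q1, q2), b)
        = (Real.exp q1 • f (q1, q2)) *
          ((fun t : ℝ => g (a - q1, Real.exp q1 * t) * Complex.exp (Complex.I * (t + q2) * β)) (b - q2)) := by
      intro b
      simp only [hH, smul_mul_assoc]
      rw [mul_assoc]
      congr 2
      norm_cast
      rw [sub_add_cancel]
    simp_rw [step1]
    rw [MeasureTheory.integral_const_mul, integral_sub_right_eq_self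
      (fun t : ℝ => g (a - q1, Real.exp q1 * t) * Complex.exp (Complex.I * (t + q2) * β)) q2]
    have step2 : ∀ t : ℝ, g (a - q1, Real.exp q1 * t) * Complex.exp (Complex.I * (t + q2) * β)
        = (fun u : ℝ => g (a - q1, u) * Complex.exp (Complex.I * u * (Real.exp (-q1) * β : ℝ)))
            (Real.exp q1 * t) * Complex.exp (Complex.I * q2 * β) := by
      intro t
      simp only []
      conv_rhs => rw [mul_assoc]
      congr 1
      rw [← Complex.exp_add]
      congr 1
      push_cast
      have h2 : Complex.exp (q1 : ℂ) * Complex.exp (-(q1 : ℂ)) = 1 := by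
        rw [← Complex.exp_add]; simp
      linear_combination (-(Complex.I * t * β)) * h2
    simp_rw [step2]
    rw [integral_mul_const, MeasureTheory.Measure.integral_comp_mul_left
      (fun u : ℝ => g (a - q1, u) * Complex.exp (Complex.I * u * (Real.exp (-q1) * β : ℝ))) (Real.exp q1)]
    have habs : |(Real.exp q1)⁻¹| = Real.exp (-q1) := by
      rw [abs_inv, abs_of_pos (Real.exp_pos _), Real.exp_neg]
    rw [habs]
    simp only [Complex.real_smul]
    linear_combination (f (q1, q2) * Complex.exp (Complex.I * q2 * β) *
      (∫ u : ℝ, g (a - q1, u) * Complex.exp (Complex.I * u * (Real.exp (-q1) * β : ℝ)))) * expC q1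
  -- outer computation
  simp only [tildeT, hconv, tconv]
  have stepA : ∀ b : ℝ,
      (∫ q : ℝ × ℝ, Real.exp q.1 • (f q * g (a - q.1, Real.exp q.1 * (b - q.2))))
        * Complex.exp (Complex.I * b * β) = ∫ q : ℝ × ℝ, H (q, b) := by
    intro b
    rw [← integral_mul_const]
  simp_rw [stepA]
  rw [integral_integral_swap (f := fun (b : ℝ) (q : ℝ × ℝ) => H (q, b)) Hint2.swap]
  rw [MeasureTheory.Measure.volume_eq_prod ℝ ℝ,
    MeasureTheory.integral_prod _ Hint3.integral_prod_left]
  simp_rw [inner, integral_mul_const]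
  rw [← integral_smul]
  congr 1
  funext q1
  have hc : (Real.exp q1 : ℂ) * (Real.exp (a - q1) : ℂ) = (Real.exp a : ℂ) := by
    norm_cast
    rw [← Real.exp_add]
    congr 1
    ring
  simp only [Complex.real_smul, hJg, hIf]
  linear_combination ((∫ b : ℝ, f (q1, b) * Complex.exp (Complex.I * b * β)) *
    (∫ u : ℝ, g (a - q1, u) * Complex.exp (Complex.I * u * (Real.exp (-q1) * β : ℝ)))) * hc.symm

lemma part2 (f : ℝ × ℝ → ℂ) (a β : ℝ) :
    tildeT (hstar f) (a, β) = tstar (tildeT f) (a, β) := by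
  simp only [tildeT, hstar, tstar]
  have key : ∀ b : ℝ,
      (Real.exp (-a) • (starRingEnd ℂ) (f (-a, -Real.exp a * b))) * Complex.exp (Complex.I * b * β)
      = Real.exp (-a) • (fun c : ℝ => (starRingEnd ℂ) (f (-a, c) * Complex.exp (Complex.I * c * (Real.exp (-a) * β)))) (-Real.exp a * b) := by
    intro b
    simp only [smul_mul_assoc]
    congr 1
    rw [map_mul]
    congr 1
    rw [← Complex.exp_conj]
    congr 1
    have h := expC a
    simp only [map_mul, Complex.conj_I, Complex.conj_ofReal]
    push_cast
    have h2 : Complex.exp (a : ℂ) * Complex.exp (-(a : ℂ)) = 1 := by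
      rw [← Complex.exp_add]; simp
    linear_combination (-Complex.I * b * β) * h2
  simp_rw [key]
  rw [integral_smul, MeasureTheory.Measure.integral_comp_mul_left
    (fun c : ℝ => (starRingEnd ℂ) (f (-a, c) * Complex.exp (Complex.I * c * (Real.exp (-a) * β)))) (-Real.exp a)]
  rw [integral_conj]
  have habs : |(-Real.exp a)⁻¹| = Real.exp (-a) := by
    rw [abs_inv, abs_neg, abs_of_pos (Real.exp_pos a), Real.exp_neg]
  rw [habs]
  rw [smul_comm, smul_smul, smul_smul, ← Real.exp_add, ← Real.exp_add]
  norm_num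
  left
  rw [← Complex.exp_conj, map_neg, Complex.conj_ofReal]

/-- The transform `f ↦ f̃` intertwines the convolution `∗̂` with the product `∗̃`,
and the involution `f ↦ f*` with the involution `F ↦ F*`. -/
theorem stmt_5 (f g : ℝ × ℝ → ℂ)
    (hf : ContDiff ℝ (⊤ : ℕ∞) f) (hf' : HasCompactSupport f)
    (hg : ContDiff ℝ (⊤ : ℕ∞) g) (hg' : HasCompactSupport g) :
    (∀ p : ℝ × ℝ, tildeT (hconv f g) p = tconv (tildeT f) (tildeT g) p) ∧
    (∀ p : ℝ × ℝ, tildeT (hstar f) p = tstar (tildeT f) p) :=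
  ⟨fun p => part1 f g hf hf' hg hg' p.1 p.2, fun p => part2 f p.1 p.2⟩
end

section
/- Define δ₁(F)(a,β) := i·a·F(a,β) and δ₂(F)(a,β) := β·(∂_β F)(a,β). Then for all smooth F, G : ℝ² → ℂ compactly supported in the first variable and k ∈ {1,2}: (i) δ_k(F ∗̃ G) = δ_k(F) ∗̃ G + F ∗̃ δ_k(G) (δ₁ and δ₂ are derivations for ∗̃); (ii) δ_k(F*) = (δ_k F)* (they are real); (iii) δ₁(δ₂(F)) = δ₂(δ₁(F)) (they commute). -/
open MeasureTheory

/-- `δ₁(F)(a,β) := i·a·F(a,β)`. -/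
noncomputable def delta1 (F : ℝ × ℝ → ℂ) : ℝ × ℝ → ℂ := fun p =>
  Complex.I * (p.1 : ℂ) * F p

/-- `δ₂(F)(a,β) := β·(∂_β F)(a,β)`. -/
noncomputable def delta2 (F : ℝ × ℝ → ℂ) : ℝ × ℝ → ℂ := fun p =>
  (p.2 : ℂ) * deriv (fun β : ℝ => F (p.1, β)) p.2

/-- partial derivative in the second variable -/
noncomputable def pd (H : ℝ × ℝ → ℂ) : ℝ × ℝ → ℂ := fun p =>
  deriv (fun β : ℝ => H (p.1, β)) p.2

lemma slice_hasDerivAt {H : ℝ × ℝ → ℂ} (hH : ContDiff ℝ (⊤ : ℕ∞) H) (a β : ℝ) :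
    HasDerivAt (fun y : ℝ => H (a, y)) (fderiv ℝ H (a, β) (0, 1)) β := by
  have h1 : HasDerivAt (fun y : ℝ => ((a, y) : ℝ × ℝ)) ((0 : ℝ), (1 : ℝ)) β :=
    (hasDerivAt_const β a).prodMk (hasDerivAt_id β)
  have h2 : HasFDerivAt H (fderiv ℝ H (a, β)) (a, β) :=
    (hH.differentiable (by simp) (a, β)).hasFDerivAt
  exact h2.comp_hasDerivAt β h1

lemma pd_eq {H : ℝ × ℝ → ℂ} (hH : ContDiff ℝ (⊤ : ℕ∞) H) (p : ℝ × ℝ) :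
    pd H p = fderiv ℝ H p (0, 1) := by
  obtain ⟨a, β⟩ := p
  exact (slice_hasDerivAt hH a β).deriv

lemma pd_hasDerivAt {H : ℝ × ℝ → ℂ} (hH : ContDiff ℝ (⊤ : ℕ∞) H) (a β : ℝ) :
    HasDerivAt (fun y : ℝ => H (a, y)) (pd H (a, β)) β := by
  rw [pd_eq hH]
  exact slice_hasDerivAt hH a β

lemma pd_cont {H : ℝ × ℝ → ℂ} (hH : ContDiff ℝ (⊤ : ℕ∞) H) : Continuous (pd H) := by
  have : pd H = fun p => fderiv ℝ H p (0, 1) := funext (pd_eq hH)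
  rw [this]
  exact (hH.continuous_fderiv (by simp)).clm_apply continuous_const

lemma pd_zero {H : ℝ × ℝ → ℂ} {K : Set ℝ} (h0 : ∀ a β : ℝ, a ∉ K → H (a, β) = 0)
    {a : ℝ} (ha : a ∉ K) (β : ℝ) : pd H (a, β) = 0 := by
  have : (fun y : ℝ => H (a, y)) = fun _ => (0 : ℂ) := funext fun y => h0 a y ha
  simp [pd, this]

lemma integrable_of_support {f : ℝ → ℂ} (hf : Continuous f) {K : Set ℝ}
    (hK : IsCompact K) (h0 : ∀ a ∉ K, f a = 0) : Integrable f :=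
  hf.integrable_of_hasCompactSupport (HasCompactSupport.intro hK h0)

/-- `δ₁` and `δ₂` are commuting real derivations for the product `∗̃`. -/
theorem stmt_9 (F G : ℝ × ℝ → ℂ)
    (hF : ContDiff ℝ (⊤ : ℕ∞) F) (hG : ContDiff ℝ (⊤ : ℕ∞) G)
    (hF' : ∃ K : Set ℝ, IsCompact K ∧ ∀ a β : ℝ, a ∉ K → F (a, β) = 0)
    (hG' : ∃ K : Set ℝ, IsCompact K ∧ ∀ a β : ℝ, a ∉ K → G (a, β) = 0) :
    -- (i) derivations
    (delta1 (tconv F G) = fun p => tconv (delta1 F) G p + tconv F (delta1 G) p) ∧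
    (delta2 (tconv F G) = fun p => tconv (delta2 F) G p + tconv F (delta2 G) p) ∧
    -- (ii) real
    delta1 (tstar F) = tstar (delta1 F) ∧
    delta2 (tstar F) = tstar (delta2 F) ∧
    -- (iii) commuting
    delta1 (delta2 F) = delta2 (delta1 F) := by
  obtain ⟨K, hK, hK0⟩ := hF'
  have hFcont : Continuous F := hF.continuous
  have hGcont : Continuous G := hG.continuous
  have hcG : ∀ (a : ℝ) (b : ℝ), Continuous fun a' : ℝ =>
      G (a - a', Real.exp (-a') * b) := by
    intro a b
    exact hG.continuous.comp (by fun_prop)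
  refine ⟨?_, ?_, ?_, ?_, ?_⟩
  · -- δ₁ derivation
    funext p
    obtain ⟨a, b⟩ := p
    have hGc := hcG a b
    have hA : Integrable (fun a' : ℝ =>
        (Complex.I * (a' : ℂ) * F (a', b)) * G (a - a', Real.exp (-a') * b)) := by
      apply integrable_of_support (by fun_prop) hK
      intro a' ha'; simp [hK0 a' b ha']
    have hB : Integrable (fun a' : ℝ =>
        F (a', b) * (Complex.I * ((a - a' : ℝ) : ℂ) * G (a - a', Real.exp (-a') * b))) := by
      apply integrable_of_support (by fun_prop) hK
      intro a' ha'; simp [hK0 a' b ha']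
    show Complex.I * (a : ℂ) * ∫ a' : ℝ, F (a', b) * G (a - a', Real.exp (-a') * b) = _
    rw [← integral_const_mul]
    rw [show (fun a' : ℝ => Complex.I * (a : ℂ) *
          (F (a', b) * G (a - a', Real.exp (-a') * b))) =
        fun a' : ℝ => (Complex.I * (a' : ℂ) * F (a', b)) * G (a - a', Real.exp (-a') * b) +
          F (a', b) * (Complex.I * ((a - a' : ℝ) : ℂ) * G (a - a', Real.exp (-a') * b)) by
      funext a'; push_cast; ring]
    rw [integral_add hA hB]
    rfl
  · -- δ₂ derivation
    funext p
    obtain ⟨a, b⟩ := p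
    -- the parametric family and its derivative
    set Φ : ℝ → ℝ → ℂ := fun x a' => F (a', x) * G (a - a', Real.exp (-a') * x) with hΦ
    set Φ' : ℝ → ℝ → ℂ := fun x a' =>
      pd F (a', x) * G (a - a', Real.exp (-a') * x) +
        F (a', x) * (Real.exp (-a') • pd G (a - a', Real.exp (-a') * x)) with hΦ'
    have hderiv : ∀ (a' x : ℝ), HasDerivAt (fun x => Φ x a') (Φ' x a') x := by
      intro a' x
      have h1 := pd_hasDerivAt hF a' x
      have hl : HasDerivAt (fun x : ℝ => Real.exp (-a') * x) (Real.exp (-a')) x := by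
        simpa using (hasDerivAt_id x).const_mul (Real.exp (-a'))
      have h2 : HasDerivAt (fun x : ℝ => G (a - a', Real.exp (-a') * x))
          (Real.exp (-a') • pd G (a - a', Real.exp (-a') * x)) x :=
        HasDerivAt.scomp x (pd_hasDerivAt hG (a - a') (Real.exp (-a') * x)) hl
      exact h1.mul h2
    have hΦ'cont : Continuous fun q : ℝ × ℝ => Φ' q.2 q.1 := by
      have := pd_cont hF
      have := pd_cont hG
      apply Continuous.add
      · exact ((pd_cont hF).comp (by fun_prop)).mul (hG.continuous.comp (by fun_prop))
      · exact (hF.continuous.comp (by fun_prop)).mul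
          (continuous_smul.comp ((by fun_prop : Continuous fun q : ℝ × ℝ => Real.exp (-q.1)).prodMk
            ((pd_cont hG).comp (by fun_prop))))
    -- bound on K × closedBall b 1
    obtain ⟨C, hC⟩ := (hK.prod (isCompact_closedBall b 1)).exists_bound_of_continuousOn
      hΦ'cont.continuousOn
    have hbound : ∀ (a' : ℝ), ∀ x ∈ Metric.ball b 1, ‖Φ' x a'‖ ≤ K.indicator (fun _ => C) a' := by
      intro a' x hx
      by_cases ha' : a' ∈ K
      · rw [Set.indicator_of_mem ha']
        exact hC (a', x) ⟨ha', Metric.ball_subset_closedBall hx⟩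
      · rw [Set.indicator_of_notMem ha']
        have h1 : F (a', x) = 0 := hK0 a' x ha'
        have h2 : pd F (a', x) = 0 := pd_zero hK0 ha' x
        simp [hΦ', h1, h2]
    have hbi : Integrable (K.indicator (fun _ => C)) := by
      rw [integrable_indicator_iff hK.measurableSet]
      exact integrableOn_const hK.measure_lt_top.ne enorm_ne_top
    have hmeas : ∀ x : ℝ, AEStronglyMeasurable (Φ x) volume := by
      intro x
      exact ((hF.continuous.comp (by fun_prop : Continuous fun a' : ℝ =>
        ((a', x) : ℝ × ℝ))).mul (hG.continuous.comp (by fun_prop))).aestronglyMeasurable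
    have hint : Integrable (Φ b) := by
      apply integrable_of_support ((hF.continuous.comp (by fun_prop)).mul
        (hG.continuous.comp (by fun_prop))) hK
      intro a' ha'; simp [hΦ, hK0 a' b ha']
    have hkey := hasDerivAt_integral_of_dominated_loc_of_deriv_le (μ := volume)
      (F := Φ) (F' := Φ') (x₀ := b) (bound := K.indicator (fun _ => C)) (Metric.ball_mem_nhds b one_pos)
      (Filter.Eventually.of_forall hmeas) hint
      (hΦ'cont.comp (continuous_id.prodMk continuous_const)).aestronglyMeasurable
      (Filter.Eventually.of_forall hbound) hbi
      (Filter.Eventually.of_forall fun a' x hx => hderiv a' x)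
    have hA : Integrable (fun a' : ℝ =>
        ((b : ℂ) * pd F (a', b)) * G (a - a', Real.exp (-a') * b)) := by
      apply integrable_of_support (by
        exact (continuous_const.mul ((pd_cont hF).comp (by fun_prop))).mul
          (hG.continuous.comp (by fun_prop))) hK
      intro a' ha'; simp [pd_zero hK0 ha' b]
    have hB : Integrable (fun a' : ℝ =>
        F (a', b) * (((Real.exp (-a') * b : ℝ) : ℂ) * pd G (a - a', Real.exp (-a') * b))) := by
      apply integrable_of_support (by
        exact (hF.continuous.comp (by fun_prop)).mul
          ((Complex.continuous_ofReal.comp (by fun_prop)).mul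
            ((pd_cont hG).comp (by fun_prop)))) hK
      intro a' ha'; simp [hK0 a' b ha']
    show (b : ℂ) * deriv (fun β : ℝ => tconv F G (a, β)) b = _
    have heq : (fun β : ℝ => tconv F G (a, β)) = fun x => ∫ a' : ℝ, Φ x a' := rfl
    rw [heq, hkey.2.deriv, ← integral_const_mul]
    rw [show (fun a' : ℝ => (b : ℂ) * Φ' b a') =
        fun a' : ℝ => ((b : ℂ) * pd F (a', b)) * G (a - a', Real.exp (-a') * b) +
          F (a', b) * (((Real.exp (-a') * b : ℝ) : ℂ) * pd G (a - a', Real.exp (-a') * b)) by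
      funext a'
      simp only [hΦ', Complex.real_smul]
      push_cast; ring]
    rw [integral_add hA hB]
    rfl
  · -- δ₁ real
    funext p
    simp only [delta1, tstar]
    rw [map_mul, map_mul, Complex.conj_I, Complex.conj_ofReal]
    push_cast; ring
  · -- δ₂ real
    funext p
    obtain ⟨a, b⟩ := p
    set c := Real.exp (-a) with hc
    have h1 : HasDerivAt (fun β : ℝ => F (-a, c * β)) (c • pd F (-a, c * b)) b := by
      have hl : HasDerivAt (fun x : ℝ => c * x) c b := by
        simpa using (hasDerivAt_id b).const_mul c
      exact HasDerivAt.scomp b (pd_hasDerivAt hF (-a) (c * b)) hl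
    have h2 := h1.star
    show (b : ℂ) * deriv (fun β : ℝ => (starRingEnd ℂ) (F (-a, c * β))) b = _
    have heq : (fun β : ℝ => (starRingEnd ℂ) (F (-a, c * β))) =
        fun β : ℝ => star (F (-a, c * β)) := rfl
    rw [heq, h2.deriv]
    show _ = (starRingEnd ℂ) (((c * b : ℝ) : ℂ) * pd F (-a, c * b))
    rw [starRingEnd_apply, star_mul']
    rw [show star (((c * b : ℝ)) : ℂ) = ((c * b : ℝ) : ℂ) by
      rw [← starRingEnd_apply, Complex.conj_ofReal]]
    rw [star_smul, Complex.real_smul]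
    push_cast
    simp only [star_trivial]
    ring
  · -- commuting
    funext p
    obtain ⟨a, b⟩ := p
    have h : HasDerivAt (fun β : ℝ => Complex.I * (a : ℂ) * F (a, β))
        (Complex.I * (a : ℂ) * pd F (a, b)) b :=
      (pd_hasDerivAt hF a b).const_mul (Complex.I * (a : ℂ))
    show Complex.I * (a : ℂ) * ((b : ℂ) * deriv (fun β : ℝ => F (a, β)) b) =
      (b : ℂ) * deriv (fun β : ℝ => Complex.I * (a : ℂ) * F (a, β)) b
    rw [h.deriv]
    show Complex.I * (a : ℂ) * ((b : ℂ) * pd F (a, b)) = _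
    ring
end

section
/- Let F, G : ℝ² → ℂ be continuous, with F compactly supported in its first variable. Then for every ν ∈ {−1, 0, 1} and all s, u ∈ ℝ: ∫_ℝ F(w−s, ν e^{-s}) G(u−w, ν e^{-w}) dw = (F ∗̃ G)(u−s, ν e^{-s}). Consequently the integral kernel K_F^ν(s,u) := F(u−s, ν e^{-s}) satisfies K_F^ν ∘ K_G^ν = K_{F ∗̃ G}^ν, i.e. the map F ↦ π_ν(F), where (π_ν(F)φ)(s) := ∫_ℝ F(u−s, ν e^{-s}) φ(u) du, is multiplicative: π_ν(F)π_ν(G) = π_ν(F ∗̃ G). -/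
open MeasureTheory

/-- Composition of the integral kernels `K_F^ν(s,u) = F(u−s, ν e^{-s})`:
`K_F^ν ∘ K_G^ν = K_{F ∗̃ G}^ν`, i.e. the map `F ↦ π_ν(F)` is multiplicative. -/
theorem stmt_11 (F G : ℝ × ℝ → ℂ)
    (hF : Continuous F) (hG : Continuous G)
    (hF' : ∃ K : Set ℝ, IsCompact K ∧ ∀ a β : ℝ, a ∉ K → F (a, β) = 0)
    (ν : ℝ) (hν : ν = -1 ∨ ν = 0 ∨ ν = 1) :
    ∀ s u : ℝ,
      ∫ w : ℝ, F (w - s, ν * Real.exp (-s)) * G (u - w, ν * Real.exp (-w))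
        = tconv F G (u - s, ν * Real.exp (-s)) := by
  intro s u
  simp only [tconv]
  rw [← MeasureTheory.integral_add_right_eq_self
    (fun w => F (w - s, ν * Real.exp (-s)) * G (u - w, ν * Real.exp (-w))) s]
  congr 1
  ext a'
  have h1 : a' + s - s = a' := by ring
  have h2 : u - (a' + s) = u - s - a' := by ring
  have h3 : ν * Real.exp (-(a' + s)) = Real.exp (-a') * (ν * Real.exp (-s)) := by
    rw [neg_add, Real.exp_add]; ring
  rw [h1, h2, h3]
end

section
/- Let ν ∈ {−1, 0, 1}, let F : ℝ² → ℂ be smooth, compactly supported in the first variable and Schwartz in the second variable, and let φ : ℝ → ℂ be a Schwartz function. Define (π_ν(F)φ)(s) := ∫_ℝ F(u−s, ν e^{-s}) φ(u) du, (∂₁ψ)(s) := s·ψ(s) and (∂₂ψ)(s) := −i·ψ'(s). Then for all s ∈ ℝ: (i) (∂₁(π_ν(F)φ))(s) − (π_ν(F)(∂₁φ))(s) = ∫_ℝ (s−u) F(u−s, ν e^{-s}) φ(u) du = (π_ν(i δ₁ F)φ)(s); (ii) (∂₂(π_ν(F)φ))(s) − (π_ν(F)(∂₂φ))(s) = ∫_ℝ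 i ν e^{-s} (∂_β F)(u−s, ν e^{-s}) φ(u) du = (π_ν(i δ₂ F)φ)(s). That is, [∂_k, π_ν(F)] = π_ν(i δ_k F) for k = 1, 2. -/
open MeasureTheory

/-- The operator `π_ν(F)` with integral kernel `K_F^ν(s,u) = F(u−s, ν e^{-s})`. -/
noncomputable def piNu (ν : ℝ) (F : ℝ × ℝ → ℂ) (φ : ℝ → ℂ) : ℝ → ℂ := fun s =>
  ∫ u : ℝ, F (u - s, ν * Real.exp (-s)) * φ u

lemma helper_int {K : Set ℝ} (hK : IsCompact K) (G h : ℝ → ℂ)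
    (hG : Continuous G) (hG0 : ∀ a ∉ K, G a = 0) (hh : Continuous h) (s : ℝ) :
    Integrable (fun u => G (u - s) * h u) := by
  apply Continuous.integrable_of_hasCompactSupport ((hG.comp (by continuity)).mul hh)
  apply HasCompactSupport.intro (hK.image (continuous_id.add (continuous_const (y := s))))
  intro u hu
  have : u - s ∉ K := fun hm => hu ⟨u - s, hm, by simp⟩
  simp [hG0 _ this]

lemma hzero {F : ℝ × ℝ → ℂ} {K : Set ℝ} (hK : IsCompact K)
    (hK0 : ∀ a β : ℝ, a ∉ K → F (a, β) = 0) {a : ℝ} (β : ℝ) (ha : a ∉ K) :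
    fderiv ℝ F (a, β) = 0 := by
  have hopen : IsOpen (Kᶜ ×ˢ (Set.univ : Set ℝ)) := (hK.isClosed.isOpen_compl).prod isOpen_univ
  have hev : F =ᶠ[nhds (a, β)] (fun _ => 0) := by
    filter_upwards [hopen.mem_nhds (by simp [ha])] with p hp
    exact hK0 p.1 p.2 hp.1
  rw [hev.fderiv_eq]; exact fderiv_const_apply 0

lemma hd1 {F : ℝ × ℝ → ℂ} (hF : ContDiff ℝ (⊤ : ℕ∞) F) (p : ℝ × ℝ) :
    HasDerivAt (fun a => F (a, p.2)) (fderiv ℝ F p (1, 0)) p.1 := by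
  have h := (hF.differentiable (by simp) p).hasFDerivAt
  have hin : HasDerivAt (fun a : ℝ => (a, p.2)) ((1 : ℝ), (0 : ℝ)) p.1 :=
    (hasDerivAt_id p.1).prodMk (hasDerivAt_const _ _)
  simpa [Function.comp_def] using h.comp_hasDerivAt p.1 hin

lemma hd2 {F : ℝ × ℝ → ℂ} (hF : ContDiff ℝ (⊤ : ℕ∞) F) (p : ℝ × ℝ) :
    HasDerivAt (fun b => F (p.1, b)) (fderiv ℝ F p (0, 1)) p.2 := by
  have h := (hF.differentiable (by simp) p).hasFDerivAt
  have hin : HasDerivAt (fun b : ℝ => (p.1, b)) ((0 : ℝ), (1 : ℝ)) p.2 :=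
    (hasDerivAt_const _ _).prodMk (hasDerivAt_id p.2)
  simpa [Function.comp_def] using h.comp_hasDerivAt p.2 hin

lemma hinner (ν u : ℝ) (s : ℝ) :
    HasDerivAt (fun s : ℝ => (u - s, ν * Real.exp (-s)))
      ((-1 : ℝ), -(ν * Real.exp (-s))) s := by
  have h1 : HasDerivAt (fun s : ℝ => u - s) (-1) s := by
    simpa using (hasDerivAt_id s).const_sub u
  have h2 : HasDerivAt (fun s : ℝ => ν * Real.exp (-s)) (-(ν * Real.exp (-s))) s := by
    have : HasDerivAt (fun s : ℝ => Real.exp (-s)) (Real.exp (-s) * (-1)) s :=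
      (Real.hasDerivAt_exp (-s)).comp s (hasDerivAt_neg s)
    have := this.const_mul ν
    rw [show -(ν * Real.exp (-s)) = ν * (Real.exp (-s) * -1) by ring]; exact this
  exact h1.prodMk h2

lemma hFs'lem {F : ℝ × ℝ → ℂ} (hF : ContDiff ℝ (⊤ : ℕ∞) F) (ν u : ℝ) (s : ℝ) (c : ℂ) :
    HasDerivAt (fun s : ℝ => F (u - s, ν * Real.exp (-s)) * c)
      ((fderiv ℝ F (u - s, ν * Real.exp (-s))) (-1, -(ν * Real.exp (-s))) * c) s :=
  (((hF.differentiable (by simp) _).hasFDerivAt).comp_hasDerivAt s (hinner ν u s)).mul_const c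

lemma key {F : ℝ × ℝ → ℂ} (hF : ContDiff ℝ (⊤ : ℕ∞) F) {K : Set ℝ} (hK : IsCompact K)
    (hK0 : ∀ a β : ℝ, a ∉ K → F (a, β) = 0) (ν : ℝ) (φ : SchwartzMap ℝ ℂ) (s₀ : ℝ) :
    HasDerivAt (fun s : ℝ => ∫ u : ℝ, F (u - s, ν * Real.exp (-s)) * φ u)
      (∫ u : ℝ, (fderiv ℝ F (u - s₀, ν * Real.exp (-s₀))) (-1, -(ν * Real.exp (-s₀))) * φ u)
      s₀ := by
  have hfc : Continuous (fderiv ℝ F) := hF.continuous_fderiv (by simp)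
  set T : Set (ℝ × ℝ) := K ×ˢ ((fun s : ℝ => ν * Real.exp (-s)) '' Set.Icc (s₀ - 1) (s₀ + 1))
    with hT
  have hTc : IsCompact T := hK.prod (isCompact_Icc.image (by continuity))
  obtain ⟨M, hM⟩ := hTc.exists_bound_of_continuousOn hfc.continuousOn
  set M' : ℝ := max M 0 with hM'
  set Cv : ℝ := max 1 (|ν| * Real.exp (1 - s₀)) with hCv
  have hCv0 : 0 ≤ Cv := le_trans zero_le_one (le_max_left _ _)
  have hM'0 : 0 ≤ M' := le_max_right _ _
  have key := hasDerivAt_integral_of_dominated_loc_of_deriv_le (μ := volume) (s := Metric.ball s₀ 1)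
    (x₀ := s₀) (F := fun s u => F (u - s, ν * Real.exp (-s)) * φ u)
    (F' := fun s u => (fderiv ℝ F (u - s, ν * Real.exp (-s))) (-1, -(ν * Real.exp (-s))) * φ u)
    (bound := fun u => M' * Cv * ‖φ u‖) (Metric.ball_mem_nhds s₀ one_pos)
    ?meas ?int ?meas' ?bnd ?bint ?diff
  · exact key.2
  case meas =>
    filter_upwards with s
    exact (((hF.continuous.comp (by continuity)).mul φ.continuous)).aestronglyMeasurable
  case int =>
    exact helper_int hK (fun a => F (a, ν * Real.exp (-s₀))) φ
      (hF.continuous.comp (by continuity)) (fun a ha => hK0 a _ ha) φ.continuous s₀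
  case meas' =>
    apply Continuous.aestronglyMeasurable
    exact ((hfc.comp (by continuity)).clm_apply continuous_const).mul φ.continuous
  case bnd =>
    filter_upwards with u
    intro s hs
    rw [Metric.mem_ball, Real.dist_eq, abs_sub_lt_iff] at hs
    by_cases hmem : u - s ∈ K
    · have hT : (u - s, ν * Real.exp (-s)) ∈ T := by
        refine ⟨hmem, ⟨s, ?_, rfl⟩⟩
        constructor <;> linarith [hs.1, hs.2]
      have h1 : ‖fderiv ℝ F (u - s, ν * Real.exp (-s))‖ ≤ M' :=
        le_trans (hM _ hT) (le_max_left _ _)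
      have h2 : ‖((-1 : ℝ), -(ν * Real.exp (-s)))‖ ≤ Cv := by
        rw [Prod.norm_def]
        apply max_le
        · refine le_trans (le_of_eq ?_) (le_max_left _ _)
          simp
        · rw [Real.norm_eq_abs, abs_neg, abs_mul, Real.abs_exp]
          refine le_trans ?_ (le_max_right _ _)
          exact mul_le_mul_of_nonneg_left (Real.exp_le_exp.2 (by linarith [hs.2])) (abs_nonneg ν)
      rw [norm_mul]
      refine mul_le_mul ?_ le_rfl (norm_nonneg _) (by positivity)
      exact le_trans (ContinuousLinearMap.le_opNorm _ _)
        (mul_le_mul h1 h2 (norm_nonneg _) hM'0)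
    · rw [hzero hK hK0 _ hmem]
      simp only [ContinuousLinearMap.zero_apply, zero_mul, norm_zero]
      positivity
  case bint =>
    exact (φ.integrable.norm).const_mul _
  case diff =>
    filter_upwards with u
    intro s _
    exact hFs'lem hF ν u s (φ u)

/-- For `F` smooth, compactly supported in the first variable and Schwartz in the second
variable, and `φ` a Schwartz function: `[∂₁, π_ν(F)] = π_ν(i δ₁ F)` and
`[∂₂, π_ν(F)] = π_ν(i δ₂ F)`, where `(∂₁ψ)(s) = s·ψ(s)` and `(∂₂ψ)(s) = −i·ψ'(s)`. -/
theorem stmt_12 (ν : ℝ) (hν : ν = -1 ∨ ν = 0 ∨ ν = 1)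
    (F : ℝ × ℝ → ℂ) (hF : ContDiff ℝ (⊤ : ℕ∞) F)
    (hF' : ∃ K : Set ℝ, IsCompact K ∧ ∀ a β : ℝ, a ∉ K → F (a, β) = 0)
    (hFs : ∀ (a : ℝ) (k n : ℕ), ∃ C : ℝ, ∀ β : ℝ,
      |β| ^ k * ‖iteratedDeriv n (fun β' : ℝ => F (a, β')) β‖ ≤ C)
    (φ : SchwartzMap ℝ ℂ) :
    ∀ s : ℝ,
      -- (i)  [∂₁, π_ν(F)] = π_ν(i δ₁ F)
      ((s : ℂ) * piNu ν F (⇑φ) s - piNu ν F (fun u => (u : ℂ) * φ u) s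
          = ∫ u : ℝ, ((s : ℂ) - (u : ℂ)) * F (u - s, ν * Real.exp (-s)) * φ u ∧
        (∫ u : ℝ, ((s : ℂ) - (u : ℂ)) * F (u - s, ν * Real.exp (-s)) * φ u)
          = piNu ν (fun p => Complex.I * delta1 F p) (⇑φ) s) ∧
      -- (ii) [∂₂, π_ν(F)] = π_ν(i δ₂ F)
      ((-Complex.I) * deriv (fun s' : ℝ => piNu ν F (⇑φ) s') s
            - piNu ν F (fun u => (-Complex.I) * deriv (⇑φ) u) s
          = ∫ u : ℝ, Complex.I * (ν : ℂ) * (Real.exp (-s) : ℂ) *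
              deriv (fun β : ℝ => F (u - s, β)) (ν * Real.exp (-s)) * φ u ∧
        (∫ u : ℝ, Complex.I * (ν : ℂ) * (Real.exp (-s) : ℂ) *
              deriv (fun β : ℝ => F (u - s, β)) (ν * Real.exp (-s)) * φ u)
          = piNu ν (fun p => Complex.I * delta2 F p) (⇑φ) s) := by
  obtain ⟨K, hK, hK0⟩ := hF'
  intro s
  have hfc : Continuous (fderiv ℝ F) := hF.continuous_fderiv (by simp)
  have hGcont : Continuous (fun a => F (a, ν * Real.exp (-s))) :=
    hF.continuous.comp (by continuity)
  have hG0 : ∀ a ∉ K, F (a, ν * Real.exp (-s)) = 0 := fun a ha => hK0 a _ ha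
  have h1 : Integrable (fun u => F (u - s, ν * Real.exp (-s)) * φ u) :=
    helper_int hK _ _ hGcont hG0 φ.continuous s
  have h2 : Integrable (fun u : ℝ => F (u - s, ν * Real.exp (-s)) * ((u : ℂ) * φ u)) :=
    helper_int hK _ _ hGcont hG0 (Complex.continuous_ofReal.mul φ.continuous) s
  constructor
  · constructor
    · rw [piNu, piNu, ← integral_const_mul, ← integral_sub (h1.const_mul _) h2]
      congr 1; funext u; ring
    · rw [piNu]
      congr 1; funext u
      simp only [delta1]
      push_cast
      linear_combination (-((u : ℂ) - (s : ℂ)) * F (u - s, ν * Real.exp (-s)) * φ u) *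
        Complex.I_mul_I
  · -- part (ii)
    set c : ℝ := ν * Real.exp (-s) with hc
    set A : ℝ → ℂ := fun u => (fderiv ℝ F (u - s, c)) (1, 0) with hA
    set B : ℝ → ℂ := fun u => (fderiv ℝ F (u - s, c)) (0, 1) with hB
    have hAcont : Continuous (fun a : ℝ => (fderiv ℝ F (a, c)) (1, 0)) :=
      (hfc.comp (by continuity)).clm_apply continuous_const
    have hBcont : Continuous (fun a : ℝ => (fderiv ℝ F (a, c)) (0, 1)) :=
      (hfc.comp (by continuity)).clm_apply continuous_const
    have hA0 : ∀ a ∉ K, (fderiv ℝ F (a, c)) (1, 0) = 0 := by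
      intro a ha; rw [hzero hK hK0 _ ha]; simp
    have hB0 : ∀ a ∉ K, (fderiv ℝ F (a, c)) (0, 1) = 0 := by
      intro a ha; rw [hzero hK hK0 _ ha]; simp
    have hIA : Integrable (fun u => A u * φ u) := helper_int hK _ _ hAcont hA0 φ.continuous s
    have hIB : Integrable (fun u => B u * φ u) := helper_int hK _ _ hBcont hB0 φ.continuous s
    have hφ'cont : Continuous (deriv (⇑φ)) := (φ.smooth ⊤).continuous_deriv (by exact_mod_cast le_top)
    have hIFφ' : Integrable (fun u => F (u - s, c) * deriv (⇑φ) u) :=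
      helper_int hK _ _ hGcont hG0 hφ'cont s
    -- integration by parts
    have hu : ∀ x : ℝ, HasDerivAt (fun x : ℝ => F (x - s, c)) (A x) x := by
      intro x
      have hin : HasDerivAt (fun x : ℝ => (x - s, c)) ((1 : ℝ), (0 : ℝ)) x :=
        ((hasDerivAt_id x).sub_const s).prodMk (hasDerivAt_const _ _)
      simpa [Function.comp_def] using ((hF.differentiable (by simp) _).hasFDerivAt).comp_hasDerivAt x hin
    have hv : ∀ x : ℝ, HasDerivAt (⇑φ) (deriv (⇑φ) x) x := fun x =>
      ((φ.smooth ⊤).differentiable (by simp) x).hasDerivAt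
    have hibp : ∫ x : ℝ, F (x - s, c) * deriv (⇑φ) x = -∫ x : ℝ, A x * φ x := by
      exact integral_mul_deriv_eq_deriv_mul_of_integrable (fun x _ => hu x) (fun x _ => hv x) hIFφ' hIA h1
    -- derivative under the integral
    have hder := key hF hK hK0 ν φ s
    have hD : deriv (fun s' : ℝ => piNu ν F (⇑φ) s') s
        = ∫ u : ℝ, (fderiv ℝ F (u - s, c)) (-1, -c) * φ u := by
      simpa [piNu, hc] using hder.deriv
    -- split the directional derivative
    have hsplit : ∀ u : ℝ, (fderiv ℝ F (u - s, c)) (-1, -c) = -A u - (c : ℂ) * B u := by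
      intro u
      have hvec : ((-1 : ℝ), -c) = (-1 : ℝ) • ((1 : ℝ), (0 : ℝ)) + (-c) • ((0 : ℝ), (1 : ℝ)) := by
        simp [Prod.ext_iff]
      rw [hvec, map_add, ContinuousLinearMap.map_smul, ContinuousLinearMap.map_smul, Complex.real_smul, Complex.real_smul]
      push_cast [hA, hB]
      ring
    have hIA' : Integrable (fun u => -(A u * φ u)) := hIA.neg
    have hIB' : Integrable (fun u => (c : ℂ) * (B u * φ u)) := hIB.const_mul _
    have e1 : (∫ u : ℝ, (fderiv ℝ F (u - s, c)) (-1, -c) * φ u)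
        = -(∫ u : ℝ, A u * φ u) - (c : ℂ) * ∫ u : ℝ, B u * φ u := by
      have heq : (fun u : ℝ => (fderiv ℝ F (u - s, c)) (-1, -c) * φ u)
          = fun u => -(A u * φ u) - (c : ℂ) * (B u * φ u) :=
        funext fun u => by rw [hsplit u]; ring
      rw [heq, integral_sub hIA' hIB', integral_neg, integral_const_mul]
    have e2 : (∫ u : ℝ, F (u - s, c) * (-Complex.I * deriv (⇑φ) u))
        = -Complex.I * -(∫ u : ℝ, A u * φ u) := by
      rw [← hibp, ← integral_const_mul]
      congr 1; funext u; ring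
    have hRHS : (∫ u : ℝ, Complex.I * (ν : ℂ) * (Real.exp (-s) : ℂ) *
          deriv (fun β : ℝ => F (u - s, β)) (ν * Real.exp (-s)) * φ u)
        = Complex.I * ((ν : ℂ) * (Real.exp (-s) : ℂ)) * ∫ u : ℝ, B u * φ u := by
      rw [← integral_const_mul]
      congr 1; funext u
      have hder2 : deriv (fun β : ℝ => F (u - s, β)) c = B u := by
        simpa [hB] using (hd2 hF (u - s, c)).deriv
      rw [hc] at hder2
      rw [hder2]; ring
    constructor
    · rw [hD, e1]
      have : piNu ν F (fun u => -Complex.I * deriv (⇑φ) u) s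
          = ∫ u : ℝ, F (u - s, c) * (-Complex.I * deriv (⇑φ) u) := by rw [piNu]
      rw [this, e2, hRHS]
      push_cast [hc]
      ring
    · rw [piNu]
      congr 1; funext u
      simp only [delta2]
      push_cast
      ring
end

section
/- For every t > 0 and all x, v ∈ ℝ: ∫_ℝ exp(−i v u) · exp(−(1/4)[coth(t)·(u−x)² + tanh(t)·(u+x)²]) du = √(2π·tanh(2t)) · exp(−(1/2)·tanh(2t)·(x² + v²)) · exp(−i·x·v/cosh(2t)). (This is the Gaussian integral arising from Mehler's formula for the heat kernel of the harmonic oscillator H = −d²/ds² + s², evaluated on the diagonal.) -/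
/-!
Since `coth t + tanh t = 2 / tanh 2t` and `coth t - tanh t = 2 / sinh 2t`, the exponent is the
quadratic `-u² / (2 tanh 2t) + (x / sinh 2t - i v) u - x² / (2 tanh 2t)` in `u`, so the integral is
the complex Gaussian integral `∫ exp (b u² + c u + d) = √(π / -b) exp (d - c² / 4b)`. Writing
`tanh 2t = sinh 2t / cosh 2t`, the identity `cosh² 2t - sinh² 2t = 1` turns `d - c² / 4b` into the
stated exponent.
-/

open Complex

namespace Real

theorem coth_add_tanh (t : ℝ) : cosh t / sinh t + tanh t = 2 / tanh (2 * t) := by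
  rcases eq_or_ne t 0 with rfl | ht
  · simp -- both sides are `0` at `t = 0`, by `x / 0 = 0`
  have hs : sinh t ≠ 0 := sinh_ne_zero.2 ht
  have hc : cosh t ≠ 0 := (cosh_pos t).ne'
  rw [tanh_eq_sinh_div_cosh, tanh_eq_sinh_div_cosh, sinh_two_mul, cosh_two_mul]
  field

theorem coth_sub_tanh (t : ℝ) : cosh t / sinh t - tanh t = 2 / sinh (2 * t) := by
  rcases eq_or_ne t 0 with rfl | ht
  · simp
  have hs : sinh t ≠ 0 := sinh_ne_zero.2 ht
  have hc : cosh t ≠ 0 := (cosh_pos t).ne'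
  rw [tanh_eq_sinh_div_cosh, sinh_two_mul]
  field_simp
  linear_combination cosh_sq_sub_sinh_sq t

end Real

theorem Complex.ofReal_cpow_one_half {r : ℝ} (hr : 0 ≤ r) :
    (r : ℂ) ^ (1 / 2 : ℂ) = (√r : ℂ) := by
  rw [Real.sqrt_eq_rpow, Complex.ofReal_cpow hr]
  norm_num

theorem mehler_exponent_eq_quadratic (a b x v u : ℂ) :
    -(I * v * u) + -(1 / 4) * (a * (u - x) ^ 2 + b * (u + x) ^ 2)
      = -((a + b) / 4) * u ^ 2 + ((a - b) / 2 * x - I * v) * u + -((a + b) / 4) * x ^ 2 := by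
  ring

theorem mehler_completed_square {S C : ℂ} (hS : S ≠ 0) (hC : C ≠ 0) (hCS : C ^ 2 - S ^ 2 = 1)
    (x v : ℂ) :
    -(2 / (S / C) / 4) * x ^ 2 - (2 / S / 2 * x - I * v) ^ 2 / (4 * -(2 / (S / C) / 4))
      = -(1 / 2) * (S / C) * (x ^ 2 + v ^ 2) + -(I * x * v / C) := by
  field_simp
  linear_combination (-4 * x ^ 2) * hCS + (4 * S ^ 2 * v ^ 2) * I_sq

/-- The Gaussian integral arising from Mehler's formula for the heat kernel of the
harmonic oscillator `H = −d²/ds² + s²`, evaluated on the diagonal: for `t > 0`,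
`∫ e^{−ivu} e^{−(1/4)[coth(t)(u−x)² + tanh(t)(u+x)²]} du
  = √(2π tanh 2t) · e^{−(1/2) tanh(2t)(x²+v²)} · e^{−i x v / cosh 2t}`. -/
theorem stmt_16 (t : ℝ) (ht : 0 < t) (x v : ℝ) :
    ∫ u : ℝ, Complex.exp (-(Complex.I * (v : ℂ) * (u : ℂ))) *
        Complex.exp (-(1 / 4 : ℂ) *
          (((Real.cosh t / Real.sinh t : ℝ) : ℂ) * ((u : ℂ) - (x : ℂ)) ^ 2 +
            ((Real.tanh t : ℝ) : ℂ) * ((u : ℂ) + (x : ℂ)) ^ 2))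
      = ((Real.sqrt (2 * Real.pi * Real.tanh (2 * t)) : ℝ) : ℂ) *
          Complex.exp (-(1 / 2 : ℂ) * ((Real.tanh (2 * t) : ℝ) : ℂ) *
            ((x : ℂ) ^ 2 + (v : ℂ) ^ 2)) *
          Complex.exp (-(Complex.I * (x : ℂ) * (v : ℂ) / ((Real.cosh (2 * t) : ℝ) : ℂ))) := by
  have hS : 0 < Real.sinh (2 * t) := Real.sinh_pos_iff.2 (by positivity)
  have hC : 0 < Real.cosh (2 * t) := Real.cosh_pos (2 * t)
  have hT : ((Real.tanh (2 * t) : ℝ) : ℂ) = Real.sinh (2 * t) / Real.cosh (2 * t) := by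
    exact_mod_cast Real.tanh_eq_sinh_div_cosh _
  have hsum : ((Real.cosh t / Real.sinh t : ℝ) : ℂ) + (Real.tanh t : ℂ)
      = 2 / (Real.tanh (2 * t) : ℂ) := by exact_mod_cast Real.coth_add_tanh t
  have hdiff : ((Real.cosh t / Real.sinh t : ℝ) : ℂ) - (Real.tanh t : ℂ)
      = 2 / (Real.sinh (2 * t) : ℂ) := by exact_mod_cast Real.coth_sub_tanh t
  simp_rw [← Complex.exp_add, mehler_exponent_eq_quadratic, hsum, hdiff, hT]
  have hre : (-(2 / ((Real.sinh (2 * t) : ℂ) / Real.cosh (2 * t)) / 4)).re < 0 := by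
    rw [show -(2 / ((Real.sinh (2 * t) : ℂ) / Real.cosh (2 * t)) / 4)
        = ((-(Real.cosh (2 * t) / (2 * Real.sinh (2 * t))) : ℝ) : ℂ) by push_cast; field,
      ofReal_re, neg_lt_zero]
    positivity
  rw [integral_cexp_quadratic hre, mehler_completed_square (by exact_mod_cast hS.ne')
    (by exact_mod_cast hC.ne') (by exact_mod_cast Real.cosh_sq_sub_sinh_sq (2 * t)),
    Complex.exp_add, ← mul_assoc]
  congr 2
  rw [Real.tanh_eq_sinh_div_cosh, ← ofReal_cpow_one_half (by positivity)]
  congr 1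
  simp only [ofReal_mul, ofReal_div, ofReal_ofNat]
  field
end

section
/- Let f : ℝ² → ℂ be bounded and continuous with sup_{y∈ℝ} |f(y,β)| → 0 as |β| → ∞. For ν ∈ {−1,0,1} and t > 0 set I_ν(t) := √(π/T(t)) · ∫∫_{ℝ²} f(y, ν e^{-x}) · exp(−T(t)·x²) · exp(−(S(t)·x − y)²/(4·T(t))) dx dy, where T(t) := (1/2)tanh(2t) and S(t) := 2 sinh²(t)/cosh(2t). Then lim_{t→0⁺} √t · I_ν(t) = π^{3/2}·f(0,0) for ν ∈ {−1,+1}, and lim_{t→0⁺} √t · I₀(t) = 2π^{3/2}·f(0,0). -/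
open MeasureTheory Filter

/-- `T(t) := (1/2)·tanh(2t)`. -/
noncomputable def Tt (t : ℝ) : ℝ := (1 / 2) * Real.tanh (2 * t)

/-- `S(t) := 2·sinh²(t)/cosh(2t)`. -/
noncomputable def St (t : ℝ) : ℝ := 2 * Real.sinh t ^ 2 / Real.cosh (2 * t)

/-- `I_ν(t) := √(π/T(t)) ∫∫ f(y, ν e^{-x}) e^{−T(t)x²} e^{−(S(t)x−y)²/(4T(t))} dx dy`. -/
noncomputable def Inu (f : ℝ × ℝ → ℂ) (ν : ℝ) (t : ℝ) : ℂ :=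
  ((Real.sqrt (Real.pi / Tt t) : ℝ) : ℂ) *
    ∫ p : ℝ × ℝ, f (p.2, ν * Real.exp (-p.1)) *
      ((Real.exp (-(Tt t) * p.1 ^ 2) : ℝ) : ℂ) *
      ((Real.exp (-((St t) * p.1 - p.2) ^ 2 / (4 * Tt t)) : ℝ) : ℂ)

open Real Topology

/-!
Substituting `x = u / √T`, `y = 2√T v + (S / √T) u` (Jacobian `2`) turns the two Gaussian factors
into `exp (-u²) exp (-v²)`, so that
`√t I_ν(t) = 2 √t √(π / T) ∫∫ f (2√T v + (S / √T) u, ν exp (-u / √T)) exp (-u² - v²)`.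
As `t → 0⁺` we have `T ~ t` and `S / √T = 2 tanh t · √T → 0`, so the prefactor tends to `2√π`
and the first argument of `f` tends to `0`. The second argument tends to `0` where `u > 0`; where
`u < 0` it is `0` if `ν = 0` and blows up otherwise, and then the decay of `f` kills the integrand.
Dominated convergence leaves `2√π f(0,0)` times the Gaussian mass of the plane (`π`) or of the
half-plane `u > 0` (`π / 2`).
-/

theorem integral_comp_linearMap_of_det_ne_zero {E F : Type*} [NormedAddCommGroup E]
    [NormedSpace ℝ E] [MeasurableSpace E] [BorelSpace E] [FiniteDimensional ℝ E]
    [NormedAddCommGroup F] [NormedSpace ℝ F] (μ : Measure E) [μ.IsAddHaarMeasure]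
    {A : E →ₗ[ℝ] E} (hA : LinearMap.det A ≠ 0) (g : E → F) :
    ∫ x, g (A x) ∂μ = |(LinearMap.det A)⁻¹| • ∫ x, g x ∂μ := by
  have hA_emb : MeasurableEmbedding A :=
    (A.equivOfDetNeZero hA).toContinuousLinearEquiv.toHomeomorph.measurableEmbedding
  rw [← hA_emb.integral_map, Measure.map_linearMap_addHaar_eq_smul_addHaar μ hA,
    integral_smul_measure, ENNReal.toReal_ofReal (abs_nonneg _)]

theorem tendsto_integral_mul_of_bounded {X ι : Type*} [MeasurableSpace X] {μ : Measure X}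
    {l : Filter ι} [l.IsCountablyGenerated] {F : ι → X → ℂ} {g : X → ℂ} {w : X → ℝ} {C : ℝ}
    (hw : Integrable w μ) (hF_meas : ∀ i, AEStronglyMeasurable (F i) μ)
    (hF_le : ∀ i x, ‖F i x‖ ≤ C) (hF_lim : ∀ᵐ x ∂μ, Tendsto (fun i => F i x) l (𝓝 (g x))) :
    Tendsto (fun i => ∫ x, F i x * w x ∂μ) l (𝓝 (∫ x, g x * w x ∂μ)) := by
  refine tendsto_integral_filter_of_dominated_convergence (fun x => C * ‖w x‖)
    (Eventually.of_forall fun i =>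
      (hF_meas i).mul (Complex.continuous_ofReal.comp_aestronglyMeasurable hw.1))
    (Eventually.of_forall fun i => Eventually.of_forall fun x => ?_) (hw.norm.const_mul C) ?_
  · rw [norm_mul, Complex.norm_real]
    exact mul_le_mul_of_nonneg_right (hF_le i x) (norm_nonneg _)
  · filter_upwards [hF_lim] with x hx using hx.mul_const _

theorem rpow_three_div_two_eq_mul_sqrt {x : ℝ} (hx : 0 ≤ x) : x ^ ((3 : ℝ) / 2) = x * √x := by
  rw [show (3 : ℝ) / 2 = 1 + 1 / 2 by norm_num, rpow_add' hx (by norm_num), rpow_one,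
    sqrt_eq_rpow]

theorem Real.continuous_tanh : Continuous tanh := by
  simp_rw [funext tanh_eq_sinh_div_cosh]
  exact continuous_sinh.div continuous_cosh fun t => (cosh_pos t).ne'

noncomputable def gauss2 (p : ℝ × ℝ) : ℝ := exp (-p.1 ^ 2) * exp (-p.2 ^ 2)

theorem integrable_gauss2 : Integrable gauss2 := by
  have h : Integrable fun x : ℝ => exp (-x ^ 2) := by
    simpa using integrable_exp_neg_mul_sq one_pos
  rw [Measure.volume_eq_prod]
  exact h.mul_prod h

theorem integral_exp_neg_sq : ∫ x : ℝ, exp (-x ^ 2) = √π := by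
  simpa using integral_gaussian 1

theorem integral_gauss2 : ∫ p, gauss2 p = π := by
  unfold gauss2
  rw [Measure.volume_eq_prod, integral_prod_mul (fun x => exp (-x ^ 2)) (fun y => exp (-y ^ 2)),
    integral_exp_neg_sq, mul_self_sqrt pi_pos.le]

theorem setIntegral_gauss2_halfPlane : ∫ p in {p : ℝ × ℝ | 0 < p.1}, gauss2 p = π / 2 := by
  have h : ∫ x in Set.Ioi (0 : ℝ), exp (-x ^ 2) = √π / 2 := by
    simpa using integral_gaussian_Ioi 1
  unfold gauss2
  rw [show {p : ℝ × ℝ | 0 < p.1} = Set.Ioi 0 ×ˢ Set.univ by ext; simp, Measure.volume_eq_prod,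
    setIntegral_prod_mul (fun x => exp (-x ^ 2)) (fun y => exp (-y ^ 2)), h,
    Measure.restrict_univ, integral_exp_neg_sq]
  field_simp
  rw [sq_sqrt pi_pos.le]

theorem integral_const_mul_gauss2 (c : ℂ) : ∫ p, c * (gauss2 p : ℂ) = c * π := by
  rw [integral_const_mul, integral_complex_ofReal, integral_gauss2]

theorem integral_indicator_mul_gauss2 (c : ℂ) :
    ∫ p, {q : ℝ × ℝ | 0 < q.1}.indicator (fun _ => c) p * (gauss2 p : ℂ) = c * (π / 2 : ℝ) := by
  have hmeas : MeasurableSet {q : ℝ × ℝ | 0 < q.1} :=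
    measurableSet_lt measurable_const measurable_fst
  have h : ∀ p, {q : ℝ × ℝ | 0 < q.1}.indicator (fun _ => c) p * (gauss2 p : ℂ) =
      {q : ℝ × ℝ | 0 < q.1}.indicator (fun p => c * (gauss2 p : ℂ)) p := fun p =>
    (Set.indicator_mul_left _ (fun _ => c) (fun p => (gauss2 p : ℂ))).symm
  simp_rw [h]
  rw [integral_indicator hmeas, integral_const_mul, integral_complex_ofReal,
    setIntegral_gauss2_halfPlane]

theorem Tt_eq_sinh_div_cosh (t : ℝ) : Tt t = sinh (2 * t) / (2 * cosh (2 * t)) := by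
  rw [Tt, tanh_eq_sinh_div_cosh]
  field_simp

theorem Tt_pos {t : ℝ} (ht : 0 < t) : 0 < Tt t := by
  have : 0 < sinh (2 * t) := sinh_pos_iff.2 (by positivity)
  rw [Tt_eq_sinh_div_cosh]
  positivity

theorem continuous_Tt : Continuous Tt :=
  continuous_const.mul (continuous_tanh.comp (continuous_const_mul 2))

theorem St_eq_two_mul_tanh_mul_Tt (t : ℝ) : St t = 2 * tanh t * Tt t := by
  have := (cosh_pos t).ne'
  have := (cosh_pos (2 * t)).ne'
  rw [St, Tt_eq_sinh_div_cosh, tanh_eq_sinh_div_cosh, sinh_two_mul]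
  field_simp

theorem hasDerivAt_Tt_zero : HasDerivAt Tt 1 0 := by
  simp_rw [funext Tt_eq_sinh_div_cosh]
  exact ((((hasDerivAt_id' (0 : ℝ)).const_mul 2).sinh).div
    ((((hasDerivAt_id' (0 : ℝ)).const_mul 2).cosh).const_mul 2) (by simp)).congr_deriv
    (by norm_num)

theorem tendsto_Tt_div_self : Tendsto (fun t => Tt t / t) (𝓝[≠] 0) (𝓝 1) := by
  have h := hasDerivAt_iff_tendsto_slope_zero.1 hasDerivAt_Tt_zero
  simpa [Tt_eq_sinh_div_cosh, div_eq_inv_mul] using h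

theorem tendsto_sqrt_Tt : Tendsto (fun t => √(Tt t)) (𝓝[>] 0) (𝓝[>] 0) := by
  refine tendsto_nhdsWithin_iff.2 ⟨?_, eventually_nhdsWithin_of_forall fun t ht =>
    sqrt_pos.2 (Tt_pos ht)⟩
  have h := ((continuous_sqrt.comp continuous_Tt).tendsto 0).mono_left
    (nhdsWithin_le_nhds (s := Set.Ioi 0))
  simpa [Function.comp_def, Tt] using h

theorem tendsto_St_div_sqrt_Tt : Tendsto (fun t => St t / √(Tt t)) (𝓝[>] 0) (𝓝 0) := by
  have h : Tendsto (fun t => 2 * tanh t * √(Tt t)) (𝓝[>] 0) (𝓝 (2 * tanh 0 * 0)) :=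
    (((continuous_tanh.tendsto 0).mono_left nhdsWithin_le_nhds).const_mul 2).mul
      (tendsto_nhdsWithin_iff.1 tendsto_sqrt_Tt).1
  rw [mul_zero] at h
  refine h.congr fun t => ?_
  show _ = St t / √(Tt t)
  rw [St_eq_two_mul_tanh_mul_Tt, mul_div_assoc, div_sqrt]

theorem tendsto_sqrt_mul_sqrt_pi_div_Tt :
    Tendsto (fun t => √t * √(π / Tt t)) (𝓝[>] 0) (𝓝 √π) := by
  have h := ((tendsto_Tt_div_self.mono_left (nhdsWithin_mono _ fun t ht => ne_of_gt ht)).inv₀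
    one_ne_zero).sqrt.const_mul √π
  rw [inv_one, sqrt_one, mul_one] at h
  refine h.congr' (eventually_nhdsWithin_of_forall fun t ht => ?_)
  show _ = √t * √(π / Tt t)
  rw [inv_div, sqrt_div pi_pos.le, sqrt_div (le_of_lt ht)]
  ring

/-- Where `f` is sampled after the substitution `x = u / r`, `y = 2 r v + s u` in the kernel
integral, with `r = √T` and `s = S / r`. -/
noncomputable def rescaledPoint (ν r s : ℝ) (p : ℝ × ℝ) : ℝ × ℝ :=
  (2 * r * p.2 + s * p.1, ν * exp (-(p.1 / r)))

theorem continuous_rescaledPoint (ν r s : ℝ) : Continuous (rescaledPoint ν r s) := by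
  unfold rescaledPoint
  fun_prop

theorem integral_gaussianKernel_eq_rescaled (f : ℝ × ℝ → ℂ) (ν : ℝ) {T : ℝ} (hT : 0 < T)
    (S : ℝ) :
    ∫ p : ℝ × ℝ, f (p.2, ν * exp (-p.1)) * ((exp (-T * p.1 ^ 2) : ℝ) : ℂ) *
        ((exp (-(S * p.1 - p.2) ^ 2 / (4 * T)) : ℝ) : ℂ) =
      2 * ∫ p, f (rescaledPoint ν √T (S / √T) p) * (gauss2 p : ℂ) := by
  set r := √T
  have hr : 0 < r := sqrt_pos.2 hT
  have hrT : r ^ 2 = T := sq_sqrt hT.le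
  let A : ℝ × ℝ →ₗ[ℝ] ℝ × ℝ := (r⁻¹ • LinearMap.fst ℝ ℝ ℝ).prod
    ((2 * r) • LinearMap.snd ℝ ℝ ℝ + (S / r) • LinearMap.fst ℝ ℝ ℝ)
  have hA : LinearMap.det A = 2 := by
    rw [← LinearMap.det_toMatrix (Module.Basis.finTwoProd ℝ), Matrix.det_fin_two]
    simp [A, LinearMap.toMatrix_apply]
    field_simp
  have h := integral_comp_linearMap_of_det_ne_zero volume (hA ▸ two_ne_zero) fun p : ℝ × ℝ =>
    f (p.2, ν * exp (-p.1)) * ((exp (-T * p.1 ^ 2) : ℝ) : ℂ) *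
      ((exp (-(S * p.1 - p.2) ^ 2 / (4 * T)) : ℝ) : ℂ)
  have hcomp : ∀ p : ℝ × ℝ, A p = (p.1 / r, 2 * r * p.2 + S / r * p.1) := fun p => by
    simp [A, div_eq_inv_mul]
  simp_rw [hcomp] at h
  rw [hA, abs_of_pos (by norm_num)] at h
  rw [← inv_smul_eq_iff₀ (by norm_num : (2⁻¹ : ℝ) ≠ 0), inv_inv] at h
  rw [← h, Complex.real_smul, Complex.ofReal_ofNat]
  congr 1
  refine integral_congr_ae (Eventually.of_forall fun p => ?_)
  have hx : -T * (p.1 / r) ^ 2 = -p.1 ^ 2 := by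
    rw [← hrT]; field_simp
  have hy : -(S * (p.1 / r) - (2 * r * p.2 + S / r * p.1)) ^ 2 / (4 * T) = -p.2 ^ 2 := by
    rw [← hrT]; field_simp; ring
  dsimp only
  rw [hx, hy, mul_assoc, rescaledPoint, gauss2, Complex.ofReal_mul]

section PointwiseLimits

variable {α : Type*} {l : Filter α} {r s : α → ℝ}

theorem tendsto_rescaledPoint_fst (hr : Tendsto r l (𝓝 0)) (hs : Tendsto s l (𝓝 0)) (ν : ℝ)
    (p : ℝ × ℝ) : Tendsto (fun a => (rescaledPoint ν (r a) (s a) p).1) l (𝓝 0) := by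
  simpa [rescaledPoint] using ((hr.const_mul 2).mul_const p.2).add (hs.mul_const p.1)

theorem tendsto_div_atTop_of_pos (hr : Tendsto r l (𝓝[>] 0)) {u : ℝ} (hu : 0 < u) :
    Tendsto (fun a => u / r a) l atTop := by
  simpa [div_eq_mul_inv] using (tendsto_inv_nhdsGT_zero.comp hr).const_mul_atTop hu

theorem tendsto_rescaledPoint_of_pos (hr : Tendsto r l (𝓝[>] 0)) (hs : Tendsto s l (𝓝 0))
    (ν : ℝ) {p : ℝ × ℝ} (hp : 0 < p.1) :
    Tendsto (fun a => rescaledPoint ν (r a) (s a) p) l (𝓝 (0, 0)) := by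
  have hexp := tendsto_exp_atBot.comp
    (tendsto_neg_atTop_atBot.comp (tendsto_div_atTop_of_pos hr hp))
  refine (tendsto_rescaledPoint_fst (tendsto_nhds_of_tendsto_nhdsWithin hr) hs ν p).prodMk_nhds ?_
  simpa using hexp.const_mul ν

theorem tendsto_rescaledPoint_zero (hr : Tendsto r l (𝓝 0)) (hs : Tendsto s l (𝓝 0))
    (p : ℝ × ℝ) : Tendsto (fun a => rescaledPoint 0 (r a) (s a) p) l (𝓝 (0, 0)) := by
  refine (tendsto_rescaledPoint_fst hr hs 0 p).prodMk_nhds ?_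
  simpa [rescaledPoint] using tendsto_const_nhds

theorem tendsto_abs_rescaledPoint_snd_of_neg (hr : Tendsto r l (𝓝[>] 0)) {ν : ℝ} (hν : ν ≠ 0)
    {p : ℝ × ℝ} (hp : p.1 < 0) :
    Tendsto (fun a => |(rescaledPoint ν (r a) (s a) p).2|) l atTop := by
  have hexp := tendsto_exp_atTop.comp (tendsto_div_atTop_of_pos hr (neg_pos.2 hp))
  simpa [rescaledPoint, abs_mul, neg_div] using hexp.const_mul_atTop (abs_pos.2 hν)

variable {f : ℝ × ℝ → ℂ}

theorem tendsto_zero_of_tendsto_abs_snd_atTop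
    (hdecay : ∀ ε > (0 : ℝ), ∃ M : ℝ, ∀ y β : ℝ, M ≤ |β| → ‖f (y, β)‖ ≤ ε) {q : α → ℝ × ℝ}
    (hq : Tendsto (fun a => |(q a).2|) l atTop) : Tendsto (fun a => f (q a)) l (𝓝 0) := by
  refine NormedAddGroup.tendsto_nhds_zero.2 fun ε hε => ?_
  obtain ⟨M, hM⟩ := hdecay (ε / 2) (half_pos hε)
  filter_upwards [hq.eventually_ge_atTop M] with a ha
  exact (hM (q a).1 (q a).2 ha).trans_lt (half_lt_self hε)

theorem ae_tendsto_comp_rescaledPoint_of_ne_zero (hf : Continuous f)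
    (hdecay : ∀ ε > (0 : ℝ), ∃ M : ℝ, ∀ y β : ℝ, M ≤ |β| → ‖f (y, β)‖ ≤ ε) {ν : ℝ} (hν : ν ≠ 0)
    (hr : Tendsto r l (𝓝[>] 0)) (hs : Tendsto s l (𝓝 0)) :
    ∀ᵐ p : ℝ × ℝ, Tendsto (fun a => f (rescaledPoint ν (r a) (s a) p)) l
      (𝓝 ({q : ℝ × ℝ | 0 < q.1}.indicator (fun _ => f (0, 0)) p)) := by
  have h_ae : ∀ᵐ p : ℝ × ℝ, p.1 ≠ 0 := by
    rw [Measure.volume_eq_prod]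
    exact Measure.quasiMeasurePreserving_fst.ae (Measure.ae_ne volume 0)
  filter_upwards [h_ae] with p hp
  rcases hp.lt_or_gt with hneg | hpos
  · rw [Set.indicator_of_notMem (by simpa using hneg.le)]
    exact tendsto_zero_of_tendsto_abs_snd_atTop hdecay
      (tendsto_abs_rescaledPoint_snd_of_neg hr hν hneg)
  · rw [Set.indicator_of_mem (by simpa using hpos)]
    exact (hf.tendsto _).comp (tendsto_rescaledPoint_of_pos hr hs ν hpos)

end PointwiseLimits

theorem sqrt_mul_Inu_eq (f : ℝ × ℝ → ℂ) (ν : ℝ) {t : ℝ} (ht : 0 < t) :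
    ((√t : ℝ) : ℂ) * Inu f ν t = ((√t * √(π / Tt t) * 2 : ℝ) : ℂ) *
      ∫ p, f (rescaledPoint ν √(Tt t) (St t / √(Tt t)) p) * (gauss2 p : ℂ) := by
  rw [Inu, integral_gaussianKernel_eq_rescaled f ν (Tt_pos ht)]
  push_cast
  ring

theorem tendsto_sqrt_mul_Inu {f : ℝ × ℝ → ℂ} (hf : Continuous f) {C : ℝ} (hC : ∀ p, ‖f p‖ ≤ C)
    (ν : ℝ) {g : ℝ × ℝ → ℂ} (hg : ∀ᵐ p : ℝ × ℝ,
      Tendsto (fun t => f (rescaledPoint ν √(Tt t) (St t / √(Tt t)) p)) (𝓝[>] 0) (𝓝 (g p))) :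
    Tendsto (fun t => ((√t : ℝ) : ℂ) * Inu f ν t) (𝓝[>] 0)
      (𝓝 (((√π * 2 : ℝ) : ℂ) * ∫ p, g p * (gauss2 p : ℂ))) := by
  have hJ := tendsto_integral_mul_of_bounded integrable_gauss2
    (fun _ => (hf.comp (continuous_rescaledPoint _ _ _)).aestronglyMeasurable)
    (fun _ _ => hC _) hg
  have hpre := (Complex.continuous_ofReal.tendsto _).comp
    (tendsto_sqrt_mul_sqrt_pi_div_Tt.mul_const 2)
  exact (hpre.mul hJ).congr'
    (eventually_nhdsWithin_of_forall fun t ht => (sqrt_mul_Inu_eq f ν ht).symm)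

/-- For `f` bounded continuous with `sup_y |f(y,β)| → 0` as `|β| → ∞`:
`lim_{t→0⁺} √t·I_ν(t) = π^{3/2} f(0,0)` for `ν = ±1`, and `= 2π^{3/2} f(0,0)` for `ν = 0`. -/
theorem stmt_18 (f : ℝ × ℝ → ℂ) (hf : Continuous f)
    (hbd : ∃ C : ℝ, ∀ p : ℝ × ℝ, ‖f p‖ ≤ C)
    (hdecay : ∀ ε > (0 : ℝ), ∃ M : ℝ, ∀ y β : ℝ, M ≤ |β| → ‖f (y, β)‖ ≤ ε)
    (ν : ℝ) :
    ((ν = -1 ∨ ν = 1) →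
      Tendsto (fun t : ℝ => ((Real.sqrt t : ℝ) : ℂ) * Inu f ν t)
        (nhdsWithin 0 (Set.Ioi 0))
        (nhds (((Real.pi ^ ((3 : ℝ) / 2) : ℝ) : ℂ) * f (0, 0)))) ∧
    (ν = 0 →
      Tendsto (fun t : ℝ => ((Real.sqrt t : ℝ) : ℂ) * Inu f ν t)
        (nhdsWithin 0 (Set.Ioi 0))
        (nhds (2 * ((Real.pi ^ ((3 : ℝ) / 2) : ℝ) : ℂ) * f (0, 0)))) := by
  obtain ⟨C, hC⟩ := hbd
  have hπ : ((π ^ ((3 : ℝ) / 2) : ℝ) : ℂ) = π * (√π : ℝ) := by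
    rw [rpow_three_div_two_eq_mul_sqrt pi_pos.le, Complex.ofReal_mul]
  refine ⟨fun hν => ?_, fun hν => ?_⟩
  · have hν0 : ν ≠ 0 := by rcases hν with rfl | rfl <;> norm_num
    convert tendsto_sqrt_mul_Inu hf hC ν (ae_tendsto_comp_rescaledPoint_of_ne_zero hf hdecay hν0
      tendsto_sqrt_Tt tendsto_St_div_sqrt_Tt) using 2
    rw [integral_indicator_mul_gauss2, hπ]
    push_cast
    ring
  · subst hν
    convert tendsto_sqrt_mul_Inu hf hC 0 (Eventually.of_forall fun p => (hf.tendsto _).comp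
      (tendsto_rescaledPoint_zero (tendsto_nhds_of_tendsto_nhdsWithin tendsto_sqrt_Tt)
        tendsto_St_div_sqrt_Tt p)) using 2
    rw [integral_const_mul_gauss2, hπ]
    push_cast
    ring
end
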